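/- arXiv:2009.11041 — 3 statements merged into one kernel-verified Lean document; each statement's English description precedes it below -/
import Mathlib

section
/- Let F be an m-dimensional LFT with parameter (i, σ, p⃗, q⃗) and s = σ^{-1}(i), with ord_p(q_s) ≤ 0. Suppose that for every k ∈ {1,…,m}: p_k ≠ 0, ord_p(p_k) ≥ 0, and if ord_p(q_k) > 0 then ord_p(p_k) = 0. If there exists x̄ ∈ D_m' such that F(x̄) ∈ D_m', then F is hyperbolic. -/
open MeasureTheory Filter Topology
open scoped Classical

noncomputable section

namespace PadicCF

variable (p : ℕ) [Fact p.Prime]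

/-- `pℤ_p`, the maximal ideal of the `p`-adic integers, viewed inside `ℚ_p`. -/
def pZ : Set ℚ_[p] := {x | ‖x‖ ≤ (p : ℝ)⁻¹}

/-- `D_m`: tuples `(x_1, …, x_m)` such that `1, x_1, …, x_m` are linearly
independent over `ℤ`. -/
def Dm (m : ℕ) : Set (Fin m → ℚ_[p]) :=
  {x | ∀ (c : ℤ) (a : Fin m → ℤ), (c : ℚ_[p]) + ∑ j, (a j : ℚ_[p]) * x j = 0 →
    c = 0 ∧ ∀ j, a j = 0}

/-- `D_m' = D_m ∩ (pℤ_p)^m`. -/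
def Dm' (m : ℕ) : Set (Fin m → ℚ_[p]) := {x | x ∈ Dm p m ∧ ∀ j, x j ∈ pZ p}

variable {m : ℕ}

/-- The `m`-dimensional linear fractional transformation with parameter `(i, σ, pv, qv)`. -/
def LFT (i : Fin m) (σ : Equiv.Perm (Fin m)) (pv qv : Fin m → ℚ)
    (x : Fin m → ℚ_[p]) : Fin m → ℚ_[p] := fun k =>
  if k = σ⁻¹ i then (pv k : ℚ_[p]) / x i - (qv k : ℚ_[p])
  else (pv k : ℚ_[p]) * x (σ k) / x i - (qv k : ℚ_[p])

/-- The inverse of the LFT with parameter `(i, σ, pv, qv)`, given by the explicit formulas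
`x_i = p_s/(y_s + q_s)` and `x_k = p_s (y_t + q_t) / (p_t (y_s + q_s))` for `k ≠ i`,
where `s = σ⁻¹ i`, `t = σ⁻¹ k`. -/
def LFTinv (i : Fin m) (σ : Equiv.Perm (Fin m)) (pv qv : Fin m → ℚ)
    (y : Fin m → ℚ_[p]) : Fin m → ℚ_[p] := fun k =>
  if k = i then (pv (σ⁻¹ i) : ℚ_[p]) / (y (σ⁻¹ i) + (qv (σ⁻¹ i) : ℚ_[p]))
  else (pv (σ⁻¹ i) : ℚ_[p]) * (y (σ⁻¹ k) + (qv (σ⁻¹ k) : ℚ_[p])) /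
        ((pv (σ⁻¹ k) : ℚ_[p]) * (y (σ⁻¹ i) + (qv (σ⁻¹ i) : ℚ_[p])))

/-- Hyperbolicity of an LFT, Definition 2.6 of the paper.  Here `ord` is `padicValRat p`;
the case `q_k = 0` (where `ord q_k = ∞` by convention) is listed explicitly in (iv). -/
def Hyperbolic (i : Fin m) (σ : Equiv.Perm (Fin m)) (pv qv : Fin m → ℚ) : Prop :=
  (∀ k, pv k ≠ 0 ∧ 0 ≤ padicValRat p (pv k)) ∧
  (qv (σ⁻¹ i) ≠ 0 ∧ padicValRat p (qv (σ⁻¹ i)) ≤ 0 ∧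
    0 < padicValRat p (pv (σ⁻¹ i) / qv (σ⁻¹ i))) ∧
  (∀ k, k ≠ σ⁻¹ i → qv k ≠ 0 → padicValRat p (qv k) ≤ 0 →
    padicValRat p (pv k / qv k) < padicValRat p (pv (σ⁻¹ i) / qv (σ⁻¹ i))) ∧
  (∀ k, k ≠ σ⁻¹ i → (qv k = 0 ∨ 0 < padicValRat p (qv k)) →
    padicValRat p (pv k) < padicValRat p (pv (σ⁻¹ i) / qv (σ⁻¹ i)))

/-- `F⁻¹(D_m')`, i.e. the image of `D_m'` under the (formula-defined) inverse of the LFT. -/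
def invImg (i : Fin m) (σ : Equiv.Perm (Fin m)) (pv qv : Fin m → ℚ) :
    Set (Fin m → ℚ_[p]) := LFTinv p i σ pv qv '' Dm' p m

/-- A family of hyperbolic LFTs indexed by `Λ` is an `m`-dimensional continued fraction
system if the sets `F_λ⁻¹(D_m')` form a partition of `D_m'`. -/
def IsCFSystem (m : ℕ) {Λ : Type*} (iF : Λ → Fin m) (σF : Λ → Equiv.Perm (Fin m))
    (pF qF : Λ → Fin m → ℚ) : Prop :=
  (∀ l, Hyperbolic p (iF l) (σF l) (pF l) (qF l)) ∧
  (⋃ l, invImg p (iF l) (σF l) (pF l) (qF l)) = Dm' p m ∧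
  (Pairwise fun l l' => Disjoint (invImg p (iF l) (σF l) (pF l) (qF l))
      (invImg p (iF l') (σF l') (pF l') (qF l')))

/-- The sup-norm `|z|_p = max_j |z_j|_p` on `ℚ_p^m`. -/
def supNorm (z : Fin m → ℚ_[p]) : NNReal := Finset.univ.sup fun j => ‖z j‖₊

/-- `v ∈ ℚ` is the integral part of `α ∈ ℚ_p` if it is of the form
`∑_{n=0}^{N} d_n p^{-n}` with digits `d_n ∈ {0, …, p-1}` and `α - v ∈ pℤ_p`. -/
def IsIntegralPart (α : ℚ_[p]) (v : ℚ) : Prop :=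
  (∃ N : ℕ, ∃ d : ℕ → ℕ, (∀ n, d n < p) ∧
      v = ∑ n ∈ Finset.range (N + 1), (d n : ℚ) / (p : ℚ) ^ n) ∧
  ‖α - (v : ℚ_[p])‖ ≤ (p : ℝ)⁻¹

/-- The integral part `⌊α⌋_p ∈ ℚ` of a `p`-adic number. -/
def padicFloor (α : ℚ_[p]) : ℚ :=
  if h : ∃ v : ℚ, IsIntegralPart p α v then h.choose else 0

/-- `J_N`: rationals `∑_{n=0}^{N} c_n p^{-n}` with digits `c_n ∈ {0,…,p-1}` and `c_N ≠ 0`. -/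
def Jset (N : ℕ) : Set ℚ :=
  {v | ∃ c : ℕ → ℕ, (∀ n, c n < p) ∧ c N ≠ 0 ∧
      v = ∑ n ∈ Finset.range (N + 1), (c n : ℚ) / (p : ℚ) ^ n}

/-- The exponent `k = max(ord_p x - ℓ, 0)`, with `k = 0` when `ℓ = ∞`. -/
def kexp (ℓ : ℕ∞) (x : ℚ_[p]) : ℤ :=
  if ℓ = ⊤ then 0 else max (x.valuation - ((WithTop.untopD 0 ℓ : ℕ) : ℤ)) 0

/-- The transformation `T_ℓ : pℤ_p → pℤ_p`, `T_ℓ(x) = p^k/x - ⌊p^k/x⌋_p` with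
`k = max(ord_p x - ℓ, 0)`, `T_ℓ(0) = 0`. -/
def Tell (ℓ : ℕ∞) (x : ℚ_[p]) : ℚ_[p] :=
  if x = 0 then 0
  else (p : ℚ_[p]) ^ kexp p ℓ x / x - (padicFloor p ((p : ℚ_[p]) ^ kexp p ℓ x / x) : ℚ_[p])

/-- The one-dimensional set `D_1' ⊆ pℤ_p` (elements of `pℤ_p` irrational over `ℤ`). -/
def D1 : Set ℚ_[p] :=
  {x | (∀ c a : ℤ, (c : ℚ_[p]) + (a : ℚ_[p]) * x = 0 → c = 0 ∧ a = 0) ∧ x ∈ pZ p}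

/-- Index set of the continued fraction system of `T_ℓ`:
pairs `(k, v)` with `k > 0, v ∈ J_ℓ`, or `k = 0` and `v ∈ J_1 ∪ ⋯ ∪ J_ℓ`. -/
def SysIndex (ℓ : ℕ∞) : Set (ℕ × ℚ) :=
  {kv | (0 < kv.1 ∧ ∃ n : ℕ, (n : ℕ∞) = ℓ ∧ kv.2 ∈ Jset p n) ∨
        (kv.1 = 0 ∧ ∃ n : ℕ, 1 ≤ n ∧ (n : ℕ∞) ≤ ℓ ∧ kv.2 ∈ Jset p n)}

/-- The exponent `r = max(-ℓ - ord_p(x_{k+1}) + ord_p(x_1), 0)` (`0` if `ℓ = ∞`). -/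
def rexp (ℓ : ℕ∞) (x1 xk : ℚ_[p]) : ℤ :=
  if ℓ = ⊤ then 0 else max (-((WithTop.untopD 0 ℓ : ℕ) : ℤ) - xk.valuation + x1.valuation) 0

/-- The multidimensional transformation `T_{ℓ,m}` on `D_m'`. -/
def Tellm (ℓ : ℕ∞) (x : Fin m → ℚ_[p]) : Fin m → ℚ_[p] := fun k =>
  if h : (k : ℕ) + 1 = m then Tell p ℓ (x ⟨0, k.pos⟩)
  else
    (p : ℚ_[p]) ^ rexp p ℓ (x ⟨0, k.pos⟩)
        (x ⟨(k : ℕ) + 1, lt_of_le_of_ne (Nat.succ_le_of_lt k.isLt) h⟩) *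
        x ⟨(k : ℕ) + 1, lt_of_le_of_ne (Nat.succ_le_of_lt k.isLt) h⟩ / x ⟨0, k.pos⟩ -
      (padicFloor p
        ((p : ℚ_[p]) ^ rexp p ℓ (x ⟨0, k.pos⟩)
            (x ⟨(k : ℕ) + 1, lt_of_le_of_ne (Nat.succ_le_of_lt k.isLt) h⟩) *
          x ⟨(k : ℕ) + 1, lt_of_le_of_ne (Nat.succ_le_of_lt k.isLt) h⟩ / x ⟨0, k.pos⟩) : ℚ_[p])

/-- The vector of powers `p⃗^{(ℓ,x)}` of Definition 3.13. -/
def pParam (ℓ : ℕ∞) (x : Fin m → ℚ_[p]) (k : Fin m) : ℚ :=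
  if ℓ = ⊤ then 1
  else if h : (k : ℕ) + 1 = m then
    (p : ℚ) ^ max (-((WithTop.untopD 0 ℓ : ℕ) : ℤ) + (x ⟨0, k.pos⟩).valuation) 0
  else
    (p : ℚ) ^ max (-((WithTop.untopD 0 ℓ : ℕ) : ℤ) -
      (x ⟨(k : ℕ) + 1, lt_of_le_of_ne (Nat.succ_le_of_lt k.isLt) h⟩).valuation +
      (x ⟨0, k.pos⟩).valuation) 0

/-- The vector `q⃗^{(ℓ,x)}` of Definition 3.13. -/
def qParam (ℓ : ℕ∞) (x : Fin m → ℚ_[p]) (k : Fin m) : ℚ :=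
  if h : (k : ℕ) + 1 = m then padicFloor p ((pParam p ℓ x k : ℚ_[p]) / x ⟨0, k.pos⟩)
  else padicFloor p ((pParam p ℓ x k : ℚ_[p]) *
    x ⟨(k : ℕ) + 1, lt_of_le_of_ne (Nat.succ_le_of_lt k.isLt) h⟩ / x ⟨0, k.pos⟩)

/-- The `j`-th convergent `π(α; j) = F⁻¹_{ψ_0} ∘ ⋯ ∘ F⁻¹_{ψ_j} (0̄)`. -/
def convergent (Finv : ℕ → (Fin m → ℚ_[p]) → Fin m → ℚ_[p]) (j : ℕ) : Fin m → ℚ_[p] :=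
  (List.range (j + 1)).foldr (fun t acc => Finv t acc) 0

/-- The exponent `h = max_k (ord_p(p_s) - ord_p(p_k))` of Section 5. -/
def hVal (i : Fin m) (σ : Equiv.Perm (Fin m)) (pv : Fin m → ℚ) : ℤ :=
  Finset.univ.sup' ⟨i, Finset.mem_univ i⟩
    fun k => padicValRat p (pv (σ⁻¹ i)) - padicValRat p (pv k)

/-- The cylinders `V_k^{(y)}` of Section 5. -/
def Vset (i : Fin m) (σ : Equiv.Perm (Fin m)) (pv qv : Fin m → ℚ) (n : ℕ)
    (a : Fin m → ℚ_[p]) (y : ℕ) (k : Fin m) : Set ℚ_[p] :=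
  if k = i then
    {t | ∃ w : ℚ_[p], ‖w‖ ≤ (p : ℝ) ^ (-(hVal p i σ pv)) ∧
      t = (pv (σ⁻¹ i) : ℚ_[p]) / (a (σ⁻¹ i) + (qv (σ⁻¹ i) : ℚ_[p])) +
        (p : ℚ_[p]) ^ ((n : ℤ) + padicValRat p (pv (σ⁻¹ i)) -
          2 * padicValRat p (qv (σ⁻¹ i))) * ((y : ℚ_[p]) + w)}
  else
    {t | ∃ w : ℚ_[p], ‖w‖ ≤ (p : ℝ) ^ (-(n : ℤ)) ∧
      t = ((pv (σ⁻¹ i) : ℚ_[p]) / (a (σ⁻¹ i) + (qv (σ⁻¹ i) : ℚ_[p])) +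
        (p : ℚ_[p]) ^ ((n : ℤ) + padicValRat p (pv (σ⁻¹ i)) -
          2 * padicValRat p (qv (σ⁻¹ i))) * (y : ℚ_[p])) *
        (a (σ⁻¹ k) + (qv (σ⁻¹ k) : ℚ_[p])) / (pv (σ⁻¹ k) : ℚ_[p])}

end PadicCF

/-!
Pick `x ∈ D_m'` with `y = F(x) ∈ D_m'`. Whenever `ord_p(q_k) ≤ 0`, the coordinate
`y_k + q_k` (which is `p_s / x_i` for `k = s` and `p_k x_{σ(k)} / x_i` otherwise) differs from
`q_k` by an element of `pℤ_p`, so by the ultrametric inequality it has the same absolute value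
as `q_k`. Hence `|p_s/q_s| = |x_i| < 1` and `|p_k/q_k| = |x_i| / |x_{σ(k)}| > |x_i|`, which
are conditions (ii) and (iii); condition (iv) holds because `ord_p(p_k) = 0` there.
-/

theorem norm_div_eq_of_norm_div_sub_lt {K : Type*} [NormedField K] [IsUltrametricDist K]
    {a t q : K} (h : ‖a / t - q‖ < ‖q‖) : ‖a / q‖ = ‖t‖ := by
  have hq : q ≠ 0 := norm_pos_iff.1 ((norm_nonneg _).trans_lt h)
  have hat : ‖a / t‖ = ‖q‖ := by
    rw [← norm_neg q]
    apply IsUltrametricDist.norm_eq_of_add_norm_lt_max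
    rw [← sub_eq_add_neg, norm_neg]
    exact h.trans_le (le_max_right _ _)
  rw [norm_div] at hat ⊢
  have ha : ‖a‖ ≠ 0 := by
    intro h0
    rw [h0, zero_div] at hat
    exact hq (norm_eq_zero.1 hat.symm)
  rw [← hat, div_div_cancel₀ ha]

namespace PadicCF

variable (p : ℕ) [Fact p.Prime]

theorem norm_ratCast_eq_zpow {a : ℚ} (ha : a ≠ 0) :
    ‖(a : ℚ_[p])‖ = (p : ℝ) ^ (-padicValRat p a) := by
  rw [Padic.norm_eq_zpow_neg_valuation (by exact_mod_cast ha), Padic.valuation_ratCast]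

theorem padicValRat_lt_padicValRat_iff {a b : ℚ} (ha : a ≠ 0) (hb : b ≠ 0) :
    padicValRat p a < padicValRat p b ↔ ‖(b : ℚ_[p])‖ < ‖(a : ℚ_[p])‖ := by
  rw [norm_ratCast_eq_zpow p ha, norm_ratCast_eq_zpow p hb,
    zpow_lt_zpow_iff_right₀ (by exact_mod_cast (Fact.out : p.Prime).one_lt), neg_lt_neg_iff]

theorem padicValRat_pos_iff_norm_lt_one {a : ℚ} (ha : a ≠ 0) :
    0 < padicValRat p a ↔ ‖(a : ℚ_[p])‖ < 1 := by
  simpa using padicValRat_lt_padicValRat_iff p one_ne_zero ha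

theorem norm_lt_one_of_mem_pZ {x : ℚ_[p]} (hx : x ∈ pZ p) : ‖x‖ < 1 :=
  hx.trans_lt (inv_lt_one_of_one_lt₀ (by exact_mod_cast (Fact.out : p.Prime).one_lt))

theorem norm_lt_norm_ratCast_of_mem_pZ {y : ℚ_[p]} (hy : y ∈ pZ p) {q : ℚ} (hq : q ≠ 0)
    (hq' : padicValRat p q ≤ 0) : ‖y‖ < ‖(q : ℚ_[p])‖ :=
  (norm_lt_one_of_mem_pZ p hy).trans_le <|
    not_lt.1 ((padicValRat_pos_iff_norm_lt_one p hq).not.1 (not_lt.2 hq'))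

theorem hyperbolic_of_exists (m : ℕ) (i : Fin m) (σ : Equiv.Perm (Fin m))
    (pv qv : Fin m → ℚ)
    (hqs : qv (σ⁻¹ i) ≠ 0) (hqs' : padicValRat p (qv (σ⁻¹ i)) ≤ 0)
    (hp1 : ∀ k, pv k ≠ 0) (hp2 : ∀ k, 0 ≤ padicValRat p (pv k))
    (hp3 : ∀ k, (qv k = 0 ∨ 0 < padicValRat p (qv k)) → padicValRat p (pv k) = 0)
    (hex : ∃ x ∈ Dm' p m, LFT p i σ pv qv x ∈ Dm' p m) :
    Hyperbolic p i σ pv qv := by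
  obtain ⟨x, ⟨-, hx⟩, -, hy⟩ := hex
  have hF (k) (hq : qv k ≠ 0) (hq' : padicValRat p (qv k) ≤ 0) :
      ‖LFT p i σ pv qv x k‖ < ‖(qv k : ℚ_[p])‖ :=
    norm_lt_norm_ratCast_of_mem_pZ p (hy k) hq hq'
  have hs_ne : pv (σ⁻¹ i) / qv (σ⁻¹ i) ≠ 0 := div_ne_zero (hp1 _) hqs
  have hs : ‖((pv (σ⁻¹ i) / qv (σ⁻¹ i) : ℚ) : ℚ_[p])‖ = ‖x i‖ := by
    rw [Rat.cast_div]
    exact norm_div_eq_of_norm_div_sub_lt (by simpa [LFT] using hF _ hqs hqs')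
  have hpos : 0 < padicValRat p (pv (σ⁻¹ i) / qv (σ⁻¹ i)) :=
    (padicValRat_pos_iff_norm_lt_one p hs_ne).2 (hs ▸ norm_lt_one_of_mem_pZ p (hx i))
  refine ⟨fun k => ⟨hp1 k, hp2 k⟩, ⟨hqs, hqs', hpos⟩, fun k hk hqk hqk' => ?_,
    fun k _ hk => hp3 k hk ▸ hpos⟩
  have hk_ne : pv k / qv k ≠ 0 := div_ne_zero (hp1 k) hqk
  have hk : ‖((pv k / qv k : ℚ) : ℚ_[p])‖ = ‖x i‖ / ‖x (σ k)‖ := by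
    rw [Rat.cast_div, ← norm_div]
    exact norm_div_eq_of_norm_div_sub_lt
      (by simpa only [LFT, if_neg hk, ← div_div_eq_mul_div] using hF k hqk hqk')
  have hi : 0 < ‖x i‖ := hs ▸ norm_pos_iff.2 (by exact_mod_cast hs_ne)
  have hσ : 0 < ‖x (σ k)‖ := by
    refine (norm_nonneg _).lt_of_ne fun h0 => hk_ne ?_
    rw [← h0, div_zero, norm_eq_zero] at hk
    exact_mod_cast hk
  rw [padicValRat_lt_padicValRat_iff p hk_ne hs_ne, hs, hk, lt_div_iff₀ hσ]
  exact mul_lt_of_lt_one_right hi (norm_lt_one_of_mem_pZ p (hx _))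

end PadicCF
end
end

section
/- Let {F_λ}_{λ∈Λ} be an m-dimensional continued fraction system with associated transformation T on D_m'. For α ∈ D_m' define ψ_j(α) = λ if T^j(α) ∈ F_λ^{-1}(D_m'), and define the j-th convergent π(α; j) = (F_{ψ_0}^{-1} ∘ ⋯ ∘ F_{ψ_j}^{-1})(0̄), where 0̄ = (0,…,0) ∈ (pℤ_p)^m. Then for every α ∈ D_m', |α − π(α; j)|_p ≤ p^{-j} for all j ≥ 0, and in particular lim_{j→∞} π(α; j) = α. -/
/-!
Each inverse map `F⁻¹` of a hyperbolic LFT sends `(pℤ_p)^m` into itself and is a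
`p⁻¹`-contraction there for the sup norm: its coordinates are quotients with the common
denominator `y_s + q_s`, whose norm is the constant `|q_s|_p ≥ 1`, and conditions (i)–(iv) make
the numerators small against it. Since `α = F_{ψ_0}⁻¹ ∘ ⋯ ∘ F_{ψ_j}⁻¹ (T^{j+1} α)` with
`T^{j+1} α ∈ (pℤ_p)^m`, while `π(α; j)` is the same composition applied to `0̄`, the two points
are at distance at most `p^{-(j+1)} · p^{-1}`.
-/

open MeasureTheory Filter Topology
open scoped Classical

noncomputable section

section Ultrametric

variable {K : Type*} [NormedField K] [IsUltrametricDist K]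

theorem norm_div_sub_div_le_of_norm_eq {a a' b b' : K} {r M d : ℝ} (hb : ‖b‖ = r)
    (hb' : ‖b'‖ = r) (hr : 1 ≤ r) (hM : 1 ≤ M) (ha' : ‖a'‖ ≤ M) (ha : ‖a - a'‖ ≤ d)
    (hbd : ‖b - b'‖ ≤ d) : ‖a / b - a' / b'‖ ≤ M * d / r := by
  have hr0 : 0 < r := zero_lt_one.trans_le hr
  have hb0 : b ≠ 0 := norm_ne_zero_iff.mp (hb ▸ hr0.ne')
  have hb0' : b' ≠ 0 := norm_ne_zero_iff.mp (hb' ▸ hr0.ne')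
  have hd : 0 ≤ d := (norm_nonneg _).trans ha
  have hid : a / b - a' / b' = ((a - a') * b' + a' * (b' - b)) / (b * b') := by
    field_simp
    ring
  have hnum : ‖(a - a') * b' + a' * (b' - b)‖ ≤ M * d * r := by
    refine (IsUltrametricDist.norm_add_le_max _ _).trans (max_le ?_ ?_)
    · rw [norm_mul, hb']
      exact mul_le_mul_of_nonneg_right (ha.trans (le_mul_of_one_le_left hd hM)) hr0.le
    · rw [norm_mul, norm_sub_rev]
      calc ‖a'‖ * ‖b - b'‖ ≤ M * d := mul_le_mul ha' hbd (norm_nonneg _) (by linarith)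
        _ ≤ M * d * r := le_mul_of_one_le_right (by positivity) hr
  rw [hid, norm_div, norm_mul, hb, hb', div_le_div_iff₀ (by positivity) hr0]
  nlinarith

end Ultrametric

section BackwardOrbit

variable {ι X : Type*} {s : Set X}

theorem mapsTo_foldr (G : ι → X → X) (hmaps : ∀ t, Set.MapsTo (G t) s s) (l : List ι) :
    Set.MapsTo (fun z => l.foldr G z) s s := by
  induction l with
  | nil => exact Set.mapsTo_id s
  | cons t l ih => exact (hmaps t).comp ih

theorem lipschitzOnWith_foldr [PseudoEMetricSpace X] {K : NNReal} (G : ι → X → X)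
    (hmaps : ∀ t, Set.MapsTo (G t) s s) (hlip : ∀ t, LipschitzOnWith K (G t) s) (l : List ι) :
    LipschitzOnWith (K ^ l.length) (fun z => l.foldr G z) s := by
  induction l with
  | nil =>
    rw [List.length_nil, pow_zero]
    exact LipschitzWith.id.lipschitzOnWith
  | cons t l ih =>
    rw [List.length_cons, pow_succ']
    exact (hlip t).comp ih (mapsTo_foldr G hmaps l)

theorem eq_foldr_range_of_forall_eq_apply_succ (G : ℕ → X → X) {x : ℕ → X}
    (hx : ∀ t, x t = G t (x (t + 1))) (j : ℕ) :
    x 0 = (List.range (j + 1)).foldr G (x (j + 1)) := by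
  induction j with
  | zero => simpa using hx 0
  | succ j ih =>
    rw [List.range_succ, List.foldr_append, List.foldr_cons, List.foldr_nil, ← hx]
    exact ih

theorem dist_foldr_range_le_of_forall_eq_apply_succ [PseudoMetricSpace X] {K : NNReal}
    (G : ℕ → X → X) (hmaps : ∀ t, Set.MapsTo (G t) s s) (hlip : ∀ t, LipschitzOnWith K (G t) s)
    {x : ℕ → X} (hx : ∀ t, x t = G t (x (t + 1))) (hxs : ∀ t, x (t + 1) ∈ s) {z : X}
    (hz : z ∈ s) (j : ℕ) :
    dist (x 0) ((List.range (j + 1)).foldr G z) ≤ K ^ (j + 1) * dist (x (j + 1)) z := by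
  rw [eq_foldr_range_of_forall_eq_apply_succ G hx j]
  simpa using (lipschitzOnWith_foldr G hmaps hlip (List.range (j + 1))).dist_le_mul _ (hxs j) _ hz

end BackwardOrbit

namespace PadicCF

open MeasureTheory Filter Topology
open scoped ENNReal NNReal

variable (p : ℕ) [Fact p.Prime]

section LinearFractional

variable {p} {m : ℕ} {i : Fin m} {σ : Equiv.Perm (Fin m)} {pv qv : Fin m → ℚ}

theorem inv_natCast_lt_one : (p : ℝ)⁻¹ < 1 :=
  inv_lt_one_of_one_lt₀ (by exact_mod_cast (Fact.out : p.Prime).one_lt)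

theorem norm_ratCast_le_of_padicValRat_add_le {a b : ℚ} (ha : a ≠ 0) (hb : b ≠ 0) {n : ℤ}
    (h : padicValRat p b + n ≤ padicValRat p a) :
    ‖(a : ℚ_[p])‖ ≤ (p : ℝ) ^ (-n) * ‖(b : ℚ_[p])‖ := by
  have hp : (1 : ℝ) ≤ p := by exact_mod_cast (Fact.out : p.Prime).one_le
  rw [Padic.norm_eq_zpow_neg_valuation (by exact_mod_cast ha),
    Padic.norm_eq_zpow_neg_valuation (by exact_mod_cast hb), Padic.valuation_ratCast,
    Padic.valuation_ratCast, ← zpow_add₀ (by positivity)]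
  exact zpow_le_zpow_right₀ hp (by omega)

theorem norm_ratCast_le_inv_mul_of_padicValRat_lt {a b : ℚ} (ha : a ≠ 0) (hb : b ≠ 0)
    (h : padicValRat p b < padicValRat p a) :
    ‖(a : ℚ_[p])‖ ≤ (p : ℝ)⁻¹ * ‖(b : ℚ_[p])‖ := by
  simpa [zpow_neg_one] using
    norm_ratCast_le_of_padicValRat_add_le (p := p) (n := 1) ha hb (by omega)

theorem one_le_norm_ratCast_of_padicValRat_nonpos {q : ℚ} (hq : q ≠ 0)
    (h : padicValRat p q ≤ 0) : 1 ≤ ‖(q : ℚ_[p])‖ := by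
  simpa using norm_ratCast_le_of_padicValRat_add_le (p := p) (n := 0) one_ne_zero hq (by simpa)

theorem norm_add_ratCast_le_max_one {a : ℚ_[p]} (ha : ‖a‖ ≤ (p : ℝ)⁻¹) (q : ℚ) :
    ‖a + (q : ℚ_[p])‖ ≤ max 1 ‖(q : ℚ_[p])‖ :=
  (Padic.nonarchimedean _ _).trans (max_le_max (ha.trans inv_natCast_lt_one.le) le_rfl)

theorem LFTinv_apply_self (y : Fin m → ℚ_[p]) :
    LFTinv p i σ pv qv y i = (pv (σ⁻¹ i) : ℚ_[p]) / (y (σ⁻¹ i) + (qv (σ⁻¹ i) : ℚ_[p])) := by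
  simp [LFTinv]

theorem LFTinv_apply_of_ne {k : Fin m} (hk : k ≠ i) (y : Fin m → ℚ_[p]) :
    LFTinv p i σ pv qv y k = (pv (σ⁻¹ i) : ℚ_[p]) / (pv (σ⁻¹ k) : ℚ_[p]) *
      ((y (σ⁻¹ k) + (qv (σ⁻¹ k) : ℚ_[p])) / (y (σ⁻¹ i) + (qv (σ⁻¹ i) : ℚ_[p]))) := by
  simp only [LFTinv, if_neg hk]
  exact mul_div_mul_comm _ _ _ _

theorem mem_closedBall_iff_forall_norm_le {y : Fin m → ℚ_[p]} :
    y ∈ Metric.closedBall 0 (p : ℝ)⁻¹ ↔ ∀ k, ‖y k‖ ≤ (p : ℝ)⁻¹ := by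
  rw [mem_closedBall_zero_iff, pi_norm_le_iff_of_nonneg (by positivity)]

theorem Dm'_subset_closedBall : Dm' p m ⊆ Metric.closedBall 0 (p : ℝ)⁻¹ :=
  fun _ hy => mem_closedBall_iff_forall_norm_le.mpr hy.2

theorem supNorm_eq_nnnorm (z : Fin m → ℚ_[p]) : supNorm p z = ‖z‖₊ :=
  (Pi.nnnorm_def z).symm

namespace Hyperbolic

theorem ratCast_pv_ne_zero (h : Hyperbolic p i σ pv qv) (k : Fin m) : (pv k : ℚ_[p]) ≠ 0 :=
  Rat.cast_ne_zero.mpr (h.1 k).1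

theorem one_le_norm_qv (h : Hyperbolic p i σ pv qv) : 1 ≤ ‖(qv (σ⁻¹ i) : ℚ_[p])‖ :=
  one_le_norm_ratCast_of_padicValRat_nonpos h.2.1.1 h.2.1.2.1

theorem norm_pv_le (h : Hyperbolic p i σ pv qv) :
    ‖(pv (σ⁻¹ i) : ℚ_[p])‖ ≤ (p : ℝ)⁻¹ * ‖(qv (σ⁻¹ i) : ℚ_[p])‖ := by
  have hv := h.2.1.2.2
  rw [padicValRat.div (h.1 _).1 h.2.1.1] at hv
  exact norm_ratCast_le_inv_mul_of_padicValRat_lt (h.1 _).1 h.2.1.1 (by omega)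

theorem norm_pv_mul_max_le (h : Hyperbolic p i σ pv qv) {t : Fin m} (ht : t ≠ σ⁻¹ i) :
    ‖(pv (σ⁻¹ i) : ℚ_[p])‖ * max 1 ‖(qv t : ℚ_[p])‖ ≤
      (p : ℝ)⁻¹ * (‖(pv t : ℚ_[p])‖ * ‖(qv (σ⁻¹ i) : ℚ_[p])‖) := by
  have hps := (h.1 (σ⁻¹ i)).1
  have hpt := (h.1 t).1
  have hqs := h.2.1.1
  by_cases hqt : qv t ≠ 0 ∧ padicValRat p (qv t) ≤ 0
  · obtain ⟨hqt0, hqtv⟩ := hqt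
    have hv := h.2.2.1 t ht hqt0 hqtv
    rw [padicValRat.div hpt hqt0, padicValRat.div hps hqs] at hv
    rw [max_eq_right (one_le_norm_ratCast_of_padicValRat_nonpos hqt0 hqtv)]
    simpa only [Rat.cast_mul, norm_mul] using
      norm_ratCast_le_inv_mul_of_padicValRat_lt (p := p) (mul_ne_zero hps hqt0)
        (mul_ne_zero hpt hqs) (by rw [padicValRat.mul hps hqt0, padicValRat.mul hpt hqs]; omega)
  · have hqt' : qv t = 0 ∨ 0 < padicValRat p (qv t) :=
      or_iff_not_imp_left.mpr fun h0 => lt_of_not_ge fun hle => hqt ⟨h0, hle⟩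
    have hv := h.2.2.2 t ht hqt'
    rw [padicValRat.div hps hqs] at hv
    have hqt1 : ‖(qv t : ℚ_[p])‖ ≤ 1 := by
      rcases hqt' with hqt0 | hqtv
      · simp [hqt0]
      · simpa using norm_ratCast_le_of_padicValRat_add_le (p := p) (n := 0)
          (fun h0 => by simp [h0] at hqtv) one_ne_zero (by simpa using hqtv.le)
    rw [max_eq_left hqt1, mul_one]
    simpa only [Rat.cast_mul, norm_mul] using
      norm_ratCast_le_inv_mul_of_padicValRat_lt (p := p) hps (mul_ne_zero hpt hqs)
        (by rw [padicValRat.mul hpt hqs]; omega)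

theorem norm_add_qv_eq (h : Hyperbolic p i σ pv qv) {a : ℚ_[p]} (ha : ‖a‖ ≤ (p : ℝ)⁻¹) :
    ‖a + (qv (σ⁻¹ i) : ℚ_[p])‖ = ‖(qv (σ⁻¹ i) : ℚ_[p])‖ := by
  have hlt : ‖a‖ < ‖(qv (σ⁻¹ i) : ℚ_[p])‖ :=
    ha.trans_lt (inv_natCast_lt_one.trans_le h.one_le_norm_qv)
  rw [Padic.add_eq_max_of_ne hlt.ne, max_eq_right hlt.le]

theorem norm_LFTinv_apply_le (h : Hyperbolic p i σ pv qv) {y : Fin m → ℚ_[p]}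
    (hy : ∀ k, ‖y k‖ ≤ (p : ℝ)⁻¹) (k : Fin m) : ‖LFTinv p i σ pv qv y k‖ ≤ (p : ℝ)⁻¹ := by
  have hQ : 0 < ‖(qv (σ⁻¹ i) : ℚ_[p])‖ := one_pos.trans_le h.one_le_norm_qv
  by_cases hk : k = i
  · rw [hk, LFTinv_apply_self, norm_div, h.norm_add_qv_eq (hy _), div_le_iff₀ hQ]
    exact h.norm_pv_le
  · have ht : σ⁻¹ k ≠ σ⁻¹ i := fun hc => hk (σ⁻¹.injective hc)
    have hP : 0 < ‖(pv (σ⁻¹ k) : ℚ_[p])‖ := norm_pos_iff.mpr (h.ratCast_pv_ne_zero _)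
    rw [LFTinv_apply_of_ne hk, norm_mul, norm_div, norm_div, h.norm_add_qv_eq (hy _),
      div_mul_div_comm, div_le_iff₀ (by positivity)]
    calc ‖(pv (σ⁻¹ i) : ℚ_[p])‖ * ‖y (σ⁻¹ k) + (qv (σ⁻¹ k) : ℚ_[p])‖
        ≤ ‖(pv (σ⁻¹ i) : ℚ_[p])‖ * max 1 ‖(qv (σ⁻¹ k) : ℚ_[p])‖ :=
          mul_le_mul_of_nonneg_left (norm_add_ratCast_le_max_one (hy _) _) (norm_nonneg _)
      _ ≤ _ := h.norm_pv_mul_max_le ht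

theorem norm_LFTinv_apply_sub_le (h : Hyperbolic p i σ pv qv) {y y' : Fin m → ℚ_[p]}
    (hy : ∀ k, ‖y k‖ ≤ (p : ℝ)⁻¹) (hy' : ∀ k, ‖y' k‖ ≤ (p : ℝ)⁻¹) (k : Fin m) :
    ‖LFTinv p i σ pv qv y k - LFTinv p i σ pv qv y' k‖ ≤ (p : ℝ)⁻¹ * ‖y - y'‖ := by
  have hQ : 0 < ‖(qv (σ⁻¹ i) : ℚ_[p])‖ := one_pos.trans_le h.one_le_norm_qv
  have hd : ∀ t (q : ℚ_[p]), ‖(y t + q) - (y' t + q)‖ ≤ ‖y - y'‖ := fun t q => by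
    simpa only [add_sub_add_right_eq_sub, Pi.sub_apply] using norm_le_pi_norm (y - y') t
  have hA {a a' : ℚ_[p]} {M : ℝ} (hM : 1 ≤ M) (ha' : ‖a'‖ ≤ M) (ha : ‖a - a'‖ ≤ ‖y - y'‖) :
      ‖a / (y (σ⁻¹ i) + (qv (σ⁻¹ i) : ℚ_[p])) - a' / (y' (σ⁻¹ i) + (qv (σ⁻¹ i) : ℚ_[p]))‖ ≤
        M * ‖y - y'‖ / ‖(qv (σ⁻¹ i) : ℚ_[p])‖ :=
    norm_div_sub_div_le_of_norm_eq (h.norm_add_qv_eq (hy _)) (h.norm_add_qv_eq (hy' _))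
      h.one_le_norm_qv hM ha' ha (hd _ _)
  by_cases hk : k = i
  · rw [hk, LFTinv_apply_self, LFTinv_apply_self, div_eq_mul_one_div,
      div_eq_mul_one_div (pv (σ⁻¹ i) : ℚ_[p]), ← mul_sub, norm_mul]
    calc ‖(pv (σ⁻¹ i) : ℚ_[p])‖ * ‖1 / (y (σ⁻¹ i) + (qv (σ⁻¹ i) : ℚ_[p])) -
          1 / (y' (σ⁻¹ i) + (qv (σ⁻¹ i) : ℚ_[p]))‖
        ≤ ((p : ℝ)⁻¹ * ‖(qv (σ⁻¹ i) : ℚ_[p])‖) * (1 * ‖y - y'‖ / ‖(qv (σ⁻¹ i) : ℚ_[p])‖) :=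
          mul_le_mul h.norm_pv_le (hA le_rfl (by simp) (by simp)) (norm_nonneg _)
            (by positivity)
      _ = (p : ℝ)⁻¹ * ‖y - y'‖ := by field_simp
  · have ht : σ⁻¹ k ≠ σ⁻¹ i := fun hc => hk (σ⁻¹.injective hc)
    have hP : 0 < ‖(pv (σ⁻¹ k) : ℚ_[p])‖ := norm_pos_iff.mpr (h.ratCast_pv_ne_zero _)
    rw [LFTinv_apply_of_ne hk, LFTinv_apply_of_ne hk, ← mul_sub, norm_mul, norm_div]
    calc ‖(pv (σ⁻¹ i) : ℚ_[p])‖ / ‖(pv (σ⁻¹ k) : ℚ_[p])‖ *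
          ‖(y (σ⁻¹ k) + (qv (σ⁻¹ k) : ℚ_[p])) / (y (σ⁻¹ i) + (qv (σ⁻¹ i) : ℚ_[p])) -
            (y' (σ⁻¹ k) + (qv (σ⁻¹ k) : ℚ_[p])) / (y' (σ⁻¹ i) + (qv (σ⁻¹ i) : ℚ_[p]))‖
        ≤ ‖(pv (σ⁻¹ i) : ℚ_[p])‖ / ‖(pv (σ⁻¹ k) : ℚ_[p])‖ *
            (max 1 ‖(qv (σ⁻¹ k) : ℚ_[p])‖ * ‖y - y'‖ / ‖(qv (σ⁻¹ i) : ℚ_[p])‖) := by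
          gcongr
          exact hA (le_max_left _ _) (norm_add_ratCast_le_max_one (hy' _) _) (hd _ _)
      _ = ‖(pv (σ⁻¹ i) : ℚ_[p])‖ * max 1 ‖(qv (σ⁻¹ k) : ℚ_[p])‖ * ‖y - y'‖ /
            (‖(pv (σ⁻¹ k) : ℚ_[p])‖ * ‖(qv (σ⁻¹ i) : ℚ_[p])‖) := by ring
      _ ≤ (p : ℝ)⁻¹ * (‖(pv (σ⁻¹ k) : ℚ_[p])‖ * ‖(qv (σ⁻¹ i) : ℚ_[p])‖) * ‖y - y'‖ /
            (‖(pv (σ⁻¹ k) : ℚ_[p])‖ * ‖(qv (σ⁻¹ i) : ℚ_[p])‖) := by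
          gcongr ?_ * _ / _
          exact h.norm_pv_mul_max_le ht
      _ = (p : ℝ)⁻¹ * ‖y - y'‖ := by field_simp

theorem mapsTo_LFTinv (h : Hyperbolic p i σ pv qv) :
    Set.MapsTo (LFTinv p i σ pv qv) (Metric.closedBall 0 (p : ℝ)⁻¹)
      (Metric.closedBall 0 (p : ℝ)⁻¹) := fun _ hy =>
  mem_closedBall_iff_forall_norm_le.mpr
    (h.norm_LFTinv_apply_le (mem_closedBall_iff_forall_norm_le.mp hy))

theorem lipschitzOnWith_LFTinv (h : Hyperbolic p i σ pv qv) :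
    LipschitzOnWith (p : ℝ≥0)⁻¹ (LFTinv p i σ pv qv) (Metric.closedBall 0 (p : ℝ)⁻¹) := by
  refine LipschitzOnWith.of_dist_le_mul fun y hy y' hy' => ?_
  rw [dist_eq_norm, dist_eq_norm, pi_norm_le_iff_of_nonneg (by positivity)]
  simpa using h.norm_LFTinv_apply_sub_le (mem_closedBall_iff_forall_norm_le.mp hy)
    (mem_closedBall_iff_forall_norm_le.mp hy')

theorem LFT_LFTinv (h : Hyperbolic p i σ pv qv) {y : Fin m → ℚ_[p]}
    (hy : y ∈ Metric.closedBall 0 (p : ℝ)⁻¹) :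
    LFT p i σ pv qv (LFTinv p i σ pv qv y) = y := by
  have hA : y (σ⁻¹ i) + (qv (σ⁻¹ i) : ℚ_[p]) ≠ 0 := by
    rw [← norm_pos_iff, h.norm_add_qv_eq (mem_closedBall_iff_forall_norm_le.mp hy _)]
    exact one_pos.trans_le h.one_le_norm_qv
  have hps := h.ratCast_pv_ne_zero (σ⁻¹ i)
  funext k
  by_cases hk : k = σ⁻¹ i
  · rw [LFT, if_pos hk, LFTinv_apply_self, hk]
    field_simp
    ring
  · have hσk : σ k ≠ i := fun hc => hk (hc ▸ (σ.symm_apply_apply k).symm)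
    have hpk := h.ratCast_pv_ne_zero k
    rw [LFT, if_neg hk, LFTinv_apply_self, LFTinv_apply_of_ne hσk,
      show σ⁻¹ (σ k) = k from σ.symm_apply_apply k]
    field_simp
    ring

theorem LFT_mem_Dm'_and_LFTinv_LFT (h : Hyperbolic p i σ pv qv) {x : Fin m → ℚ_[p]}
    (hx : x ∈ invImg p i σ pv qv) :
    LFT p i σ pv qv x ∈ Dm' p m ∧ LFTinv p i σ pv qv (LFT p i σ pv qv x) = x := by
  obtain ⟨y, hy, rfl⟩ := hx
  rw [h.LFT_LFTinv (Dm'_subset_closedBall hy)]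
  exact ⟨hy, rfl⟩

end Hyperbolic

end LinearFractional


theorem convergent_tendsto (m : ℕ) {Λ : Type}
    (iF : Λ → Fin m) (σF : Λ → Equiv.Perm (Fin m)) (pF qF : Λ → Fin m → ℚ)
    (hsys : IsCFSystem p m iF σF pF qF)
    (T : (Fin m → ℚ_[p]) → Fin m → ℚ_[p])
    (hT : ∀ l, ∀ x ∈ invImg p (iF l) (σF l) (pF l) (qF l),
      T x = LFT p (iF l) (σF l) (pF l) (qF l) x)
    (α : Fin m → ℚ_[p]) (ψ : ℕ → Λ)
    (hψ : ∀ j, T^[j] α ∈ invImg p (iF (ψ j)) (σF (ψ j)) (pF (ψ j)) (qF (ψ j))) :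
    (∀ j : ℕ,
      supNorm p (α - convergent p
          (fun t => LFTinv p (iF (ψ t)) (σF (ψ t)) (pF (ψ t)) (qF (ψ t))) j) ≤
        ((p : NNReal) ^ j)⁻¹) ∧
    Tendsto (fun j : ℕ => convergent p
        (fun t => LFTinv p (iF (ψ t)) (σF (ψ t)) (pF (ψ t)) (qF (ψ t))) j)
      atTop (𝓝 α) := by
  set G : ℕ → (Fin m → ℚ_[p]) → Fin m → ℚ_[p] :=
    fun t => LFTinv p (iF (ψ t)) (σF (ψ t)) (pF (ψ t)) (qF (ψ t))
  have hhyp (t : ℕ) : Hyperbolic p (iF (ψ t)) (σF (ψ t)) (pF (ψ t)) (qF (ψ t)) := hsys.1 (ψ t)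
  have horbit (t : ℕ) : T^[t + 1] α ∈ Dm' p m ∧ G t (T^[t + 1] α) = T^[t] α := by
    rw [Function.iterate_succ_apply', hT _ _ (hψ t)]
    exact (hhyp t).LFT_mem_Dm'_and_LFTinv_LFT (hψ t)
  have hdist (j : ℕ) : dist α (convergent p G j) ≤ ((p : ℝ)⁻¹) ^ j :=
    calc dist α (convergent p G j) ≤ ((p : ℝ)⁻¹) ^ (j + 1) * dist (T^[j + 1] α) 0 := by
          show dist α ((List.range (j + 1)).foldr G 0) ≤ _
          simpa using dist_foldr_range_le_of_forall_eq_apply_succ G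
            (fun t => (hhyp t).mapsTo_LFTinv) (fun t => (hhyp t).lipschitzOnWith_LFTinv)
            (fun t => (horbit t).2.symm) (fun t => Dm'_subset_closedBall (horbit t).1)
            (Metric.mem_closedBall_self (by positivity)) j
      _ ≤ ((p : ℝ)⁻¹) ^ (j + 1) * (p : ℝ)⁻¹ := by
          gcongr
          exact Dm'_subset_closedBall (horbit j).1
      _ ≤ ((p : ℝ)⁻¹) ^ j := by
          rw [← pow_succ]
          exact pow_le_pow_of_le_one (by positivity) inv_natCast_lt_one.le (by omega)
  refine ⟨fun j => ?_, ?_⟩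
  · rw [supNorm_eq_nnnorm, ← NNReal.coe_le_coe, coe_nnnorm, ← dist_eq_norm]
    simpa using hdist j
  · rw [tendsto_iff_dist_tendsto_zero]
    exact squeeze_zero (fun _ => dist_nonneg) (fun j => (dist_comm _ _).trans_le (hdist j))
      (tendsto_pow_atTop_nhds_zero_of_lt_one (by positivity) inv_natCast_lt_one)

end PadicCF
end
end

section
/- Let ℓ ∈ ℤ_{≥0} ∪ {∞}. The family {F_{k,v} : k > 0, v ∈ J_ℓ} ∪ {F_{0,v} : v ∈ J_1 ∪ ⋯ ∪ J_ℓ} is a 1-dimensional continued fraction system (each member is hyperbolic and the preimages F_{k,v}^{-1}(D_1') form a partition of D_1'), and the transformation on D_1' associated with this system is T_ℓ. (For ℓ = 0 the second family is empty; for ℓ = ∞ the first family is empty and J_1 ∪ ⋯ ∪ J_ℓ means ∪_{k≥1} J_k.) -/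
open MeasureTheory Filter Topology
open scoped Classical

noncomputable section

/-!
For `v ∈ J_n` and `y ∈ pℤ_p` we have `‖y + v‖ = p^n`, so `x = p^k / (y + v)` has valuation
`k + n`, and `(k, v)` is an admissible index exactly when `k` is the exponent
`max (ord x - ℓ, 0)` that `T_ℓ` uses at `x`. On the branch of `(k, v)` the map `T_ℓ` therefore
computes `p^k / x - ⌊p^k / x⌋_p = (y + v) - v = y`, inverting `y ↦ p^k / (y + v)`. Conversely,
for `x ∈ D_1'` the exponent `k` is forced, `‖p^k / x‖ = p^n` with `n = ord x - k`, and
`v = ⌊p^k / x⌋_p` is the only element of `J_n` within `pℤ_p` of `p^k / x`, so `x` lies on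
exactly one branch.
-/

open Finset

theorem notMem_range_ratCast_iff {K : Type*} [Field K] [CharZero K] (x : K) :
    x ∉ Set.range ((↑) : ℚ → K) ↔ ∀ c a : ℤ, (c : K) + a * x = 0 → c = 0 ∧ a = 0 := by
  constructor
  · intro hx c a h
    by_cases ha : a = 0
    · subst ha
      exact ⟨by simpa using h, rfl⟩
    · refine absurd ⟨-c / a, ?_⟩ hx
      push_cast
      field_simp
      linear_combination -h
  · rintro h ⟨r, rfl⟩
    have hden := (h (-r.num) r.den (by rw [Rat.cast_def]; field_simp; push_cast; ring)).2
    exact r.den_nz (by exact_mod_cast hden)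

theorem ratCast_div_add_mem_range_iff {K : Type*} [Field K] [CharZero K] {q : ℚ} (hq : q ≠ 0)
    (r : ℚ) (y : K) :
    (q : K) / (y + r) ∈ Set.range ((↑) : ℚ → K) ↔ y ∈ Set.range ((↑) : ℚ → K) := by
  constructor
  · rintro ⟨s, hs⟩
    refine ⟨q / s - r, ?_⟩
    rw [Rat.cast_sub, Rat.cast_div, hs, div_div_cancel₀ (Rat.cast_ne_zero.2 hq),
      add_sub_cancel_right]
  · rintro ⟨s, rfl⟩
    exact ⟨q / (s + r), by push_cast; rfl⟩

namespace PadicCF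

section

variable {p : ℕ}

theorem exists_nat_eq_digitSum {d : ℕ → ℕ} (hd : ∀ n, d n < p) (N : ℕ) :
    ∃ M < p ^ (N + 1), M % p = d N ∧
      ∑ n ∈ range (N + 1), (d n : ℚ) / (p : ℚ) ^ n = M / (p : ℚ) ^ N := by
  have hp : (p : ℚ) ≠ 0 := Nat.cast_ne_zero.2 (Nat.pos_iff_ne_zero.1 (hd 0).pos)
  induction N with
  | zero => exact ⟨d 0, by simpa using hd 0, Nat.mod_eq_of_lt (hd 0), by simp⟩
  | succ N ih =>
    obtain ⟨M, hM, -, hsum⟩ := ih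
    refine ⟨M * p + d (N + 1), ?_, ?_, ?_⟩
    · calc M * p + d (N + 1) < (M + 1) * p := by linarith [hd (N + 1)]
        _ ≤ p ^ (N + 1) * p := Nat.mul_le_mul_right _ hM
        _ = p ^ (N + 1 + 1) := (pow_succ _ _).symm
    · rw [Nat.mul_add_mod_self_right, Nat.mod_eq_of_lt (hd _)]
    · rw [sum_range_succ, hsum]
      push_cast
      field_simp
      ring

theorem natCast_div_pow_eq_digitSum {M N : ℕ} (hM : M < p ^ (N + 1)) :
    (M : ℚ) / (p : ℚ) ^ N =
      ∑ n ∈ range (N + 1), ((M / p ^ (N - n) % p : ℕ) : ℚ) / (p : ℚ) ^ n := by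
  have hp : (p : ℚ) ≠ 0 := Nat.cast_ne_zero.2 (by rintro rfl; simp at hM)
  induction N generalizing M with
  | zero => simp [Nat.mod_eq_of_lt (by simpa using hM)]
  | succ N ih =>
    have hMp : M / p < p ^ (N + 1) := Nat.div_lt_of_lt_mul (by rwa [mul_comm, ← pow_succ])
    rw [sum_range_succ, ← sum_congr rfl fun n hn => by
        rw [show N + 1 - n = N - n + 1 by simp at hn; omega, pow_succ', ← Nat.div_div_eq_div_mul],
      ← ih hMp, Nat.sub_self, pow_zero, Nat.div_one]
    conv_lhs => rw [← Nat.div_add_mod M p]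
    push_cast
    field_simp
    ring

theorem mem_Jset_iff {N : ℕ} {v : ℚ} :
    v ∈ Jset p N ↔ ∃ M < p ^ (N + 1), ¬ p ∣ M ∧ v = M / (p : ℚ) ^ N := by
  constructor
  · rintro ⟨c, hc, hcN, rfl⟩
    obtain ⟨M, hM, hMp, hsum⟩ := exists_nat_eq_digitSum hc N
    exact ⟨M, hM, by rwa [Nat.dvd_iff_mod_eq_zero, hMp], hsum⟩
  · rintro ⟨M, hM, hpM, rfl⟩
    have hp : 0 < p := Nat.pos_of_ne_zero (by rintro rfl; simp at hM)
    refine ⟨fun n => M / p ^ (N - n) % p, fun n => Nat.mod_lt _ hp, ?_,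
      natCast_div_pow_eq_digitSum hM⟩
    simpa [← Nat.dvd_iff_mod_eq_zero] using hpM

theorem exists_mem_Jset_of_mem_sysIndex {ℓ : ℕ∞} {k : ℕ} {v : ℚ}
    (h : (k, v) ∈ SysIndex p ℓ) : ∃ n, v ∈ Jset p n ∧ 1 ≤ k + n := by
  rcases h with ⟨hk, n, -, hv⟩ | ⟨-, n, hn, -, hv⟩ <;> exact ⟨n, hv, by omega⟩

end

variable {p : ℕ} [hp : Fact p.Prime]

theorem mem_D1_iff {y : ℚ_[p]} :
    y ∈ D1 p ↔ y ∉ Set.range ((↑) : ℚ → ℚ_[p]) ∧ ‖y‖ ≤ (p : ℝ)⁻¹ := by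
  rw [notMem_range_ratCast_iff]
  rfl

theorem mem_Dm'_one_iff {x : Fin 1 → ℚ_[p]} : x ∈ Dm' p 1 ↔ x 0 ∈ D1 p := by
  simp only [Dm', Dm, D1, pZ, Fin.forall_fin_one, Fin.sum_univ_one, Set.mem_ofPred_eq]
  constructor
  · rintro ⟨h, hx⟩
    exact ⟨fun c a hca => by simpa using h c (fun _ => a) hca, hx⟩
  · rintro ⟨h, hx⟩
    exact ⟨fun c a hca => h c (a 0) hca, hx⟩

theorem norm_le_inv_iff_one_le_valuation {x : ℚ_[p]} (hx : x ≠ 0) :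
    ‖x‖ ≤ (p : ℝ)⁻¹ ↔ 1 ≤ x.valuation := by
  rw [Padic.norm_eq_zpow_neg_valuation hx, ← zpow_neg_one,
    zpow_le_zpow_iff_right₀ (by exact_mod_cast hp.out.one_lt), neg_le_neg_iff]

theorem padicValRat_of_mem_Jset {N : ℕ} {v : ℚ} (hv : v ∈ Jset p N) :
    padicValRat p v = -N := by
  obtain ⟨M, -, hpM, rfl⟩ := mem_Jset_iff.1 hv
  have hM : (M : ℚ) ≠ 0 := Nat.cast_ne_zero.2 (by rintro rfl; exact hpM (dvd_zero p))
  rw [div_eq_mul_inv, padicValRat.mul hM (by simp [hp.out.ne_zero]),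
    padicValRat.self_pow_inv, padicValRat.of_nat, padicValNat.eq_zero_of_not_dvd hpM]
  simp

theorem ne_zero_of_mem_Jset {N : ℕ} {v : ℚ} (hv : v ∈ Jset p N) : v ≠ 0 := by
  obtain ⟨M, -, hpM, rfl⟩ := mem_Jset_iff.1 hv
  have hM : (M : ℚ) ≠ 0 := Nat.cast_ne_zero.2 (by rintro rfl; exact hpM (dvd_zero p))
  exact div_ne_zero hM (pow_ne_zero _ (Nat.cast_ne_zero.2 hp.out.ne_zero))

theorem norm_of_mem_Jset {N : ℕ} {v : ℚ} (hv : v ∈ Jset p N) :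
    ‖(v : ℚ_[p])‖ = (p : ℝ) ^ (N : ℤ) := by
  rw [Padic.norm_eq_zpow_neg_valuation (by exact_mod_cast ne_zero_of_mem_Jset hv),
    Padic.valuation_ratCast, padicValRat_of_mem_Jset hv, neg_neg]

theorem eq_of_mem_Jset_of_mem_Jset {N N' : ℕ} {v : ℚ} (hv : v ∈ Jset p N)
    (hv' : v ∈ Jset p N') : N = N' := by
  have := (padicValRat_of_mem_Jset hv).symm.trans (padicValRat_of_mem_Jset hv')
  omega

theorem IsIntegralPart.exists_nat {α : ℚ_[p]} {v : ℚ} (h : IsIntegralPart p α v) :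
    ∃ N, ∀ K ≥ N, ∃ M < p ^ (K + 1), v = M / (p : ℚ) ^ K := by
  obtain ⟨⟨N, d, hd, rfl⟩, -⟩ := h
  obtain ⟨M, hM, -, hsum⟩ := exists_nat_eq_digitSum hd N
  refine ⟨N, fun K hK => ?_⟩
  obtain ⟨j, rfl⟩ := Nat.exists_eq_add_of_le hK
  refine ⟨M * p ^ j, ?_, ?_⟩
  · calc M * p ^ j < p ^ (N + 1) * p ^ j := Nat.mul_lt_mul_of_pos_right hM (pow_pos hp.out.pos _)
      _ = p ^ (N + j + 1) := by rw [← pow_add]; ring_nf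
  · have : (p : ℚ) ≠ 0 := Nat.cast_ne_zero.2 hp.out.ne_zero
    rw [hsum, pow_add]
    push_cast
    field_simp

theorem eq_of_norm_natCast_div_pow_sub_le {K M M' : ℕ} (hM : M < p ^ (K + 1))
    (hM' : M' < p ^ (K + 1))
    (h : ‖(M : ℚ_[p]) / (p : ℚ_[p]) ^ K - M' / (p : ℚ_[p]) ^ K‖ ≤ (p : ℝ)⁻¹) : M = M' := by
  have : (p : ℚ_[p]) ≠ 0 := Nat.cast_ne_zero.2 hp.out.ne_zero
  have hdiff : (((M : ℤ) - M' : ℤ) : ℚ_[p])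
      = ((M : ℚ_[p]) / (p : ℚ_[p]) ^ K - M' / (p : ℚ_[p]) ^ K) * (p : ℚ_[p]) ^ K := by
    push_cast
    field_simp
  have hnorm : ‖(((M : ℤ) - M' : ℤ) : ℚ_[p])‖ ≤ (p : ℝ) ^ (-((K + 1 : ℕ) : ℤ)) := by
    rw [hdiff, norm_mul, Padic.norm_p_pow]
    calc _ ≤ (p : ℝ)⁻¹ * (p : ℝ) ^ (-(K : ℤ)) := by gcongr
      _ = _ := by
        rw [← zpow_neg_one, ← zpow_add₀ (by exact_mod_cast hp.out.ne_zero)]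
        push_cast
        ring_nf
  have hdvd := (Padic.norm_int_le_pow_iff_dvd _ _).1 hnorm
  exact ((Nat.modEq_iff_dvd.2 (by exact_mod_cast hdvd)).eq_of_lt_of_lt hM' hM).symm

theorem IsIntegralPart.unique {α : ℚ_[p]} {v w : ℚ} (hv : IsIntegralPart p α v)
    (hw : IsIntegralPart p α w) : v = w := by
  obtain ⟨N, hN⟩ := hv.exists_nat
  obtain ⟨N', hN'⟩ := hw.exists_nat
  obtain ⟨M, hM, rfl⟩ := hN (max N N') (le_max_left _ _)
  obtain ⟨M', hM', rfl⟩ := hN' (max N N') (le_max_right _ _)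
  have hclose := (IsUltrametricDist.dist_triangle_max _ α _).trans
    (max_le ((dist_comm _ _).trans_le hv.2) hw.2)
  push_cast at hclose
  rw [eq_of_norm_natCast_div_pow_sub_le hM hM' (by rwa [← dist_eq_norm])]

theorem padicFloor_eq {α : ℚ_[p]} {v : ℚ} (h : IsIntegralPart p α v) : padicFloor p α = v := by
  have hex : ∃ w, IsIntegralPart p α w := ⟨v, h⟩
  rw [padicFloor, dif_pos hex]
  exact hex.choose_spec.unique h

theorem isIntegralPart_of_mem_Jset {α : ℚ_[p]} {N : ℕ} {v : ℚ} (hv : v ∈ Jset p N)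
    (h : ‖α - v‖ ≤ (p : ℝ)⁻¹) : IsIntegralPart p α v :=
  let ⟨c, hc, _, hvc⟩ := hv
  ⟨⟨N, c, hc, hvc⟩, h⟩

theorem exists_nat_lt_norm_sub_le (z : ℤ_[p]) (n : ℕ) :
    ∃ M < p ^ n, ‖(z : ℚ_[p]) - M‖ ≤ (p : ℝ) ^ (-n : ℤ) :=
  ⟨z.appr n, z.appr_lt n, (PadicInt.norm_le_pow_iff_mem_span_pow _ n).2 (z.appr_spec n)⟩

theorem exists_mem_Jset_isIntegralPart {α : ℚ_[p]} {n : ℕ} (hα : ‖α‖ = (p : ℝ) ^ (n : ℤ)) :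
    ∃ v ∈ Jset p n, IsIntegralPart p α v := by
  have hp0 : (p : ℚ_[p]) ≠ 0 := Nat.cast_ne_zero.2 hp.out.ne_zero
  have hz : ‖α * (p : ℚ_[p]) ^ n‖ = 1 := by
    rw [norm_mul, hα, Padic.norm_p_pow, ← zpow_add₀ (by exact_mod_cast hp0), add_neg_cancel,
      zpow_zero]
  obtain ⟨M, hM, hzM⟩ := exists_nat_lt_norm_sub_le ⟨_, hz.le⟩ (n + 1)
  have hzM' : ‖α * (p : ℚ_[p]) ^ n - M‖ < 1 :=
    hzM.trans_lt (zpow_lt_one_of_neg₀ (by exact_mod_cast hp.out.one_lt) (by omega))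
  -- `M` is a unit because it is close to the unit `α pⁿ`
  have hpM : ¬ p ∣ M := by
    rw [← Padic.norm_natCast_lt_one_iff]
    intro hM1
    have := (IsUltrametricDist.norm_add_le_max (α * (p : ℚ_[p]) ^ n - M) M).trans_lt
      (max_lt hzM' hM1)
    rw [sub_add_cancel, hz] at this
    exact lt_irrefl _ this
  have hv : ((M / (p : ℚ) ^ n : ℚ)) ∈ Jset p n := mem_Jset_iff.2 ⟨M, hM, hpM, rfl⟩
  refine ⟨_, hv, isIntegralPart_of_mem_Jset hv ?_⟩
  have hdiff : α - ((M / (p : ℚ) ^ n : ℚ) : ℚ_[p])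
      = (α * (p : ℚ_[p]) ^ n - M) / (p : ℚ_[p]) ^ n := by
    push_cast
    field_simp
  rw [hdiff, norm_div, Padic.norm_p_pow, div_le_iff₀ (zpow_pos (by exact_mod_cast hp.out.pos) _)]
  calc _ ≤ (p : ℝ) ^ (-(n + 1 : ℕ) : ℤ) := hzM
    _ = (p : ℝ)⁻¹ * (p : ℝ) ^ (-n : ℤ) := by
      rw [← zpow_neg_one, ← zpow_add₀ (by exact_mod_cast hp.out.ne_zero)]
      push_cast
      ring_nf

theorem LFTinv_one (k : ℕ) (v : ℚ) (y : Fin 1 → ℚ_[p]) :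
    LFTinv p (0 : Fin 1) 1 (fun _ => (p : ℚ) ^ k) (fun _ => v) y
      = fun _ => (p : ℚ_[p]) ^ k / (y 0 + v) := by
  funext j
  simp [LFTinv, Subsingleton.elim j 0]

theorem LFT_one (k : ℕ) (v : ℚ) (x : Fin 1 → ℚ_[p]) :
    LFT p (0 : Fin 1) 1 (fun _ => (p : ℚ) ^ k) (fun _ => v) x
      = fun _ => (p : ℚ_[p]) ^ k / x 0 - v := by
  funext j
  simp [LFT, Subsingleton.elim j 0]

theorem mem_invImg_one_iff {k : ℕ} {v : ℚ} {x : Fin 1 → ℚ_[p]} :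
    x ∈ invImg p (0 : Fin 1) 1 (fun _ => (p : ℚ) ^ k) (fun _ => v) ↔
      ∃ y ∈ D1 p, x = fun _ => (p : ℚ_[p]) ^ k / (y + v) := by
  constructor
  · rintro ⟨y, hy, rfl⟩
    exact ⟨y 0, mem_Dm'_one_iff.1 hy, LFTinv_one k v y⟩
  · rintro ⟨y, hy, rfl⟩
    exact ⟨fun _ => y, mem_Dm'_one_iff.2 hy, LFTinv_one k v _⟩

theorem norm_add_of_mem_Jset {n : ℕ} {v : ℚ} (hv : v ∈ Jset p n) {y : ℚ_[p]}
    (hy : ‖y‖ ≤ (p : ℝ)⁻¹) : ‖y + v‖ = (p : ℝ) ^ (n : ℤ) := by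
  have hlt : ‖y‖ < ‖(v : ℚ_[p])‖ := by
    rw [norm_of_mem_Jset hv]
    calc ‖y‖ ≤ (p : ℝ)⁻¹ := hy
      _ < 1 := inv_lt_one_of_one_lt₀ (by exact_mod_cast hp.out.one_lt)
      _ ≤ (p : ℝ) ^ (n : ℤ) := one_le_zpow₀ (by exact_mod_cast hp.out.one_lt.le) (by positivity)
  rw [Padic.add_eq_max_of_ne hlt.ne, max_eq_right hlt.le, norm_of_mem_Jset hv]

theorem add_ne_zero_of_mem_Jset {n : ℕ} {v : ℚ} (hv : v ∈ Jset p n) {y : ℚ_[p]}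
    (hy : ‖y‖ ≤ (p : ℝ)⁻¹) : y + v ≠ 0 :=
  norm_ne_zero_iff.1 (by simp [norm_add_of_mem_Jset hv hy, hp.out.ne_zero])

theorem valuation_pow_div_add {k n : ℕ} {v : ℚ} (hv : v ∈ Jset p n) {y : ℚ_[p]}
    (hy : ‖y‖ ≤ (p : ℝ)⁻¹) : ((p : ℚ_[p]) ^ k / (y + v)).valuation = k + n := by
  have hyv := add_ne_zero_of_mem_Jset hv hy
  rw [div_eq_mul_inv, Padic.valuation_mul (pow_ne_zero _ (Nat.cast_ne_zero.2 hp.out.ne_zero))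
    (inv_ne_zero hyv), Padic.valuation_inv, Padic.valuation_pow, Padic.valuation_p]
  have hval := Padic.norm_eq_zpow_neg_valuation hyv
  rw [norm_add_of_mem_Jset hv hy] at hval
  have := zpow_right_injective₀ (by exact_mod_cast hp.out.pos)
    (by exact_mod_cast hp.out.one_lt.ne') hval
  omega

theorem mem_sysIndex_iff_kexp_eq {ℓ : ℕ∞} {k n : ℕ} {v : ℚ} (hv : v ∈ Jset p n)
    (hkn : 1 ≤ k + n) {x : ℚ_[p]} (hx : x.valuation = k + n) :
    (k, v) ∈ SysIndex p ℓ ↔ kexp p ℓ x = k := by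
  have hJ : ∀ n', v ∈ Jset p n' ↔ n' = n := fun n' =>
    ⟨fun hv' => eq_of_mem_Jset_of_mem_Jset hv' hv, fun h => h ▸ hv⟩
  simp only [SysIndex, Set.mem_ofPred_eq, hJ, exists_eq_right_right]
  cases ℓ using ENat.recTopCoe with
  | top => simp [kexp]; omega
  | coe L => simp [kexp, hx]; omega

theorem exists_kexp_eq_valuation_eq (ℓ : ℕ∞) {x : ℚ_[p]} (hx : 1 ≤ x.valuation) :
    ∃ k n : ℕ, kexp p ℓ x = k ∧ x.valuation = k + n := by
  cases ℓ using ENat.recTopCoe with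
  | top => exact ⟨0, x.valuation.toNat, by simp [kexp], by omega⟩
  | coe L =>
    refine ⟨(x.valuation - L).toNat, x.valuation.toNat - (x.valuation - L).toNat, ?_, by omega⟩
    simp [kexp]
    omega

theorem kexp_pow_div_add {ℓ : ℕ∞} {k : ℕ} {v : ℚ} (hkv : (k, v) ∈ SysIndex p ℓ) {y : ℚ_[p]}
    (hy : ‖y‖ ≤ (p : ℝ)⁻¹) : kexp p ℓ ((p : ℚ_[p]) ^ k / (y + v)) = k := by
  obtain ⟨n, hv, hkn⟩ := exists_mem_Jset_of_mem_sysIndex hkv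
  exact (mem_sysIndex_iff_kexp_eq hv hkn (valuation_pow_div_add hv hy)).1 hkv

theorem padicFloor_add_of_mem_Jset {n : ℕ} {v : ℚ} (hv : v ∈ Jset p n) {y : ℚ_[p]}
    (hy : ‖y‖ ≤ (p : ℝ)⁻¹) : padicFloor p (y + v) = v :=
  padicFloor_eq (isIntegralPart_of_mem_Jset hv (by rwa [add_sub_cancel_right]))

theorem Tell_pow_div_add {ℓ : ℕ∞} {k : ℕ} {v : ℚ} (hkv : (k, v) ∈ SysIndex p ℓ) {y : ℚ_[p]}
    (hy : ‖y‖ ≤ (p : ℝ)⁻¹) : Tell p ℓ ((p : ℚ_[p]) ^ k / (y + v)) = y := by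
  obtain ⟨n, hv, -⟩ := exists_mem_Jset_of_mem_sysIndex hkv
  have hpk : (p : ℚ_[p]) ^ k ≠ 0 := pow_ne_zero _ (Nat.cast_ne_zero.2 hp.out.ne_zero)
  rw [Tell, if_neg (div_ne_zero hpk (add_ne_zero_of_mem_Jset hv hy)), kexp_pow_div_add hkv hy,
    zpow_natCast, div_div_cancel₀ hpk, padicFloor_add_of_mem_Jset hv hy, add_sub_cancel_right]

theorem hyperbolic_of_mem_sysIndex {ℓ : ℕ∞} {k : ℕ} {v : ℚ} (hkv : (k, v) ∈ SysIndex p ℓ) :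
    Hyperbolic p (0 : Fin 1) 1 (fun _ => (p : ℚ) ^ k) fun _ => v := by
  obtain ⟨n, hv, hkn⟩ := exists_mem_Jset_of_mem_sysIndex hkv
  have hpk : (p : ℚ) ^ k ≠ 0 := pow_ne_zero _ (Nat.cast_ne_zero.2 hp.out.ne_zero)
  have hpk_val : padicValRat p ((p : ℚ) ^ k) = k := by
    rw [padicValRat.pow, padicValRat.self hp.out.one_lt, mul_one]
  have hv_val := padicValRat_of_mem_Jset hv
  dsimp only [Hyperbolic]
  refine ⟨fun _ => ⟨hpk, by omega⟩, ⟨ne_zero_of_mem_Jset hv, by omega, ?_⟩, ?_, ?_⟩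
  · rw [padicValRat.div hpk (ne_zero_of_mem_Jset hv)]
    omega
  all_goals exact fun j hj => absurd (Subsingleton.elim j _) hj

theorem invImg_subset_Dm' {ℓ : ℕ∞} {k : ℕ} {v : ℚ} (hkv : (k, v) ∈ SysIndex p ℓ) :
    invImg p (0 : Fin 1) 1 (fun _ => (p : ℚ) ^ k) (fun _ => v) ⊆ Dm' p 1 := by
  intro x hx
  obtain ⟨y, hy, rfl⟩ := mem_invImg_one_iff.1 hx
  obtain ⟨n, hv, hkn⟩ := exists_mem_Jset_of_mem_sysIndex hkv
  rw [mem_D1_iff] at hy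
  have hirr : (p : ℚ_[p]) ^ k / (y + v) ∉ Set.range ((↑) : ℚ → ℚ_[p]) := by
    rw [← Rat.cast_natCast, ← Rat.cast_pow,
      ratCast_div_add_mem_range_iff (pow_ne_zero _ (Nat.cast_ne_zero.2 hp.out.ne_zero))]
    exact hy.1
  have hx0 : (p : ℚ_[p]) ^ k / (y + v) ≠ 0 := fun h => hirr ⟨0, by rw [h, Rat.cast_zero]⟩
  refine mem_Dm'_one_iff.2 (mem_D1_iff.2 ⟨hirr, (norm_le_inv_iff_one_le_valuation hx0).2 ?_⟩)
  rw [valuation_pow_div_add hv hy.2]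
  omega

theorem exists_mem_sysIndex_mem_invImg (ℓ : ℕ∞) {x : Fin 1 → ℚ_[p]} (hx : x ∈ Dm' p 1) :
    ∃ kv ∈ SysIndex p ℓ, x ∈ invImg p (0 : Fin 1) 1 (fun _ => (p : ℚ) ^ kv.1) fun _ => kv.2 := by
  obtain ⟨hirr, hnorm⟩ := mem_D1_iff.1 (mem_Dm'_one_iff.1 hx)
  have hx0 : x 0 ≠ 0 := fun h => hirr ⟨0, by rw [h, Rat.cast_zero]⟩
  have hval := (norm_le_inv_iff_one_le_valuation hx0).1 hnorm
  obtain ⟨k, n, hk, hkn⟩ := exists_kexp_eq_valuation_eq ℓ hval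
  have hpk : (p : ℚ_[p]) ^ k ≠ 0 := pow_ne_zero _ (Nat.cast_ne_zero.2 hp.out.ne_zero)
  have hα : ‖(p : ℚ_[p]) ^ k / x 0‖ = (p : ℝ) ^ (n : ℤ) := by
    rw [norm_div, Padic.norm_p_pow, Padic.norm_eq_zpow_neg_valuation hx0, hkn,
      ← zpow_sub₀ (by exact_mod_cast hp.out.ne_zero)]
    ring_nf
  obtain ⟨v, hv, hint⟩ := exists_mem_Jset_isIntegralPart hα
  refine ⟨(k, v), (mem_sysIndex_iff_kexp_eq hv (by omega) hkn).2 hk,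
    mem_invImg_one_iff.2 ⟨(p : ℚ_[p]) ^ k / x 0 - v, mem_D1_iff.2 ⟨fun hmem => hirr ?_, hint.2⟩, ?_⟩⟩
  · have := (ratCast_div_add_mem_range_iff
      (pow_ne_zero k (Nat.cast_ne_zero.2 hp.out.ne_zero)) v _).2 hmem
    rwa [sub_add_cancel, Rat.cast_pow, Rat.cast_natCast, div_div_cancel₀ hpk] at this
  · funext j
    rw [Subsingleton.elim j 0, sub_add_cancel, div_div_cancel₀ hpk]

theorem eq_of_mem_invImg_of_mem_invImg {ℓ : ℕ∞} {kv kv' : ℕ × ℚ} (h : kv ∈ SysIndex p ℓ)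
    (h' : kv' ∈ SysIndex p ℓ) {x : Fin 1 → ℚ_[p]}
    (hx : x ∈ invImg p (0 : Fin 1) 1 (fun _ => (p : ℚ) ^ kv.1) fun _ => kv.2)
    (hx' : x ∈ invImg p (0 : Fin 1) 1 (fun _ => (p : ℚ) ^ kv'.1) fun _ => kv'.2) :
    kv = kv' := by
  obtain ⟨k, v⟩ := kv
  obtain ⟨k', v'⟩ := kv'
  obtain ⟨y, hy, rfl⟩ := mem_invImg_one_iff.1 hx
  obtain ⟨y', hy', hyy'⟩ := mem_invImg_one_iff.1 hx'
  replace hyy' := congrFun hyy' 0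
  obtain ⟨n, hv, -⟩ := exists_mem_Jset_of_mem_sysIndex h
  obtain ⟨n', hv', -⟩ := exists_mem_Jset_of_mem_sysIndex h'
  have hk : k = k' := by
    have := kexp_pow_div_add h' (mem_D1_iff.1 hy').2
    rwa [← hyy', kexp_pow_div_add h (mem_D1_iff.1 hy).2, Nat.cast_inj] at this
  subst hk
  have hpk : (p : ℚ_[p]) ^ k ≠ 0 := pow_ne_zero _ (Nat.cast_ne_zero.2 hp.out.ne_zero)
  have hsum : y + v = y' + v' := by
    rw [← div_div_cancel₀ hpk (b := y + v), hyy', div_div_cancel₀ hpk]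
  rw [← padicFloor_add_of_mem_Jset hv (mem_D1_iff.1 hy).2,
    ← padicFloor_add_of_mem_Jset hv' (mem_D1_iff.1 hy').2, hsum]

theorem Tell_eq_LFT_of_mem_invImg {ℓ : ℕ∞} {k : ℕ} {v : ℚ} (hkv : (k, v) ∈ SysIndex p ℓ)
    {x : Fin 1 → ℚ_[p]} (hx : x ∈ invImg p (0 : Fin 1) 1 (fun _ => (p : ℚ) ^ k) fun _ => v) :
    (fun _ : Fin 1 => Tell p ℓ (x 0)) =
      LFT p (0 : Fin 1) 1 (fun _ => (p : ℚ) ^ k) (fun _ => v) x := by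
  obtain ⟨y, hy, rfl⟩ := mem_invImg_one_iff.1 hx
  rw [LFT_one, Tell_pow_div_add hkv (mem_D1_iff.1 hy).2,
    div_div_cancel₀ (pow_ne_zero _ (Nat.cast_ne_zero.2 hp.out.ne_zero)), add_sub_cancel_right]

end PadicCF

namespace PadicCF

open MeasureTheory Filter Topology
open scoped ENNReal NNReal

variable (p : ℕ) [Fact p.Prime]

theorem tell_system (ℓ : ℕ∞) :
    (∀ kv ∈ SysIndex p ℓ,
      Hyperbolic p (0 : Fin 1) 1 (fun _ => (p : ℚ) ^ kv.1) fun _ => kv.2) ∧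
    (∀ kv ∈ SysIndex p ℓ,
      invImg p (0 : Fin 1) 1 (fun _ => (p : ℚ) ^ kv.1) (fun _ => kv.2) ⊆ Dm' p 1) ∧
    (∀ x ∈ Dm' p 1, ∃! kv : ℕ × ℚ, kv ∈ SysIndex p ℓ ∧
      x ∈ invImg p (0 : Fin 1) 1 (fun _ => (p : ℚ) ^ kv.1) fun _ => kv.2) ∧
    (∀ kv ∈ SysIndex p ℓ,
      ∀ x ∈ invImg p (0 : Fin 1) 1 (fun _ => (p : ℚ) ^ kv.1) fun _ => kv.2,
      (fun _ : Fin 1 => Tell p ℓ (x 0)) =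
        LFT p (0 : Fin 1) 1 (fun _ => (p : ℚ) ^ kv.1) (fun _ => kv.2) x) := by
  refine ⟨fun _ => hyperbolic_of_mem_sysIndex, fun _ => invImg_subset_Dm', fun x hx => ?_,
    fun _ => Tell_eq_LFT_of_mem_invImg⟩
  obtain ⟨kv, hkv, hmem⟩ := exists_mem_sysIndex_mem_invImg ℓ hx
  exact ⟨kv, ⟨hkv, hmem⟩, fun kv' ⟨hkv', hmem'⟩ =>
    eq_of_mem_invImg_of_mem_invImg hkv' hkv hmem' hmem⟩

end PadicCF
end
end
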